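/- arXiv:2401.16726 — 2 statements merged into one kernel-verified Lean document; each statement's English description precedes it below -/
import Mathlib

section
/- For a discrete memoryless channel P_{Y|X} with finite input alphabet 𝒳 and finite output alphabet 𝒴 all of whose entries are positive, the capacity C = max_{P_X} I(P_X, P_{Y|X}) satisfies C ≤ C_1, where C_1 = max_{x, x'} D(P_{Y|X=x} || P_{Y|X=x'}). -/
/-!
Write `Q = ∑ x', P_X x' W_x'` for the output law, so that `I = ∑ x, P_X x D(W_x ‖ Q)`.
Since `t ↦ log (a / t)` is convex, `D(W_x ‖ Q) ≤ ∑ x', P_X x' D(W_x ‖ W_x')`, and an average of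
the divergences between rows is at most their maximum.
-/

open Real Finset

lemma log_div_sum_mul_le_sum_mul_log_div {ι : Type*} (s : Finset ι) (p b : ι → ℝ) {a : ℝ}
    (ha : 0 < a) (hp : ∀ i ∈ s, 0 ≤ p i) (hp1 : ∑ i ∈ s, p i = 1) (hb : ∀ i ∈ s, 0 < b i) :
    log (a / ∑ i ∈ s, p i * b i) ≤ ∑ i ∈ s, p i * log (a / b i) := by
  have jensen : ∑ i ∈ s, p i * log (b i) ≤ log (∑ i ∈ s, p i * b i) := by
    simpa only [smul_eq_mul] using
      strictConcaveOn_log_Ioi.concaveOn.le_map_sum hp hp1 fun i hi => Set.mem_Ioi.mpr (hb i hi)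
  have hmix : 0 < ∑ i ∈ s, p i * b i := by
    obtain ⟨j, hj, hpj⟩ : ∃ j ∈ s, 0 < p j := by
      by_contra! h
      rw [sum_eq_zero fun i hi => le_antisymm (h i hi) (hp i hi)] at hp1
      exact zero_ne_one hp1
    exact (mul_pos hpj (hb j hj)).trans_le <|
      single_le_sum (fun i hi => mul_nonneg (hp i hi) (hb i hi).le) hj
  have hrhs : ∑ i ∈ s, p i * log (a / b i) = log a - ∑ i ∈ s, p i * log (b i) := by
    rw [← one_mul (log a), ← hp1, sum_mul, ← sum_sub_distrib]
    exact sum_congr rfl fun i hi => by rw [log_div ha.ne' (hb i hi).ne']; ring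
  rw [log_div ha.ne' hmix.ne', hrhs]
  linarith

lemma sum_mul_le_of_le {ι : Type*} (s : Finset ι) (w f : ι → ℝ) {M : ℝ}
    (hw : ∀ i ∈ s, 0 ≤ w i) (hw1 : ∑ i ∈ s, w i = 1) (hf : ∀ i ∈ s, f i ≤ M) :
    ∑ i ∈ s, w i * f i ≤ M :=
  calc ∑ i ∈ s, w i * f i ≤ ∑ i ∈ s, w i * M :=
        sum_le_sum fun i hi => mul_le_mul_of_nonneg_left (hf i hi) (hw i hi)
    _ = M := by rw [← sum_mul, hw1, one_mul]

lemma mutualInfo_le_sum_mul_sum_mul_klDiv {α β : Type*} [Fintype α] [Fintype β]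
    (W : α → β → ℝ) (hW : ∀ x y, 0 < W x y)
    (PX : α → ℝ) (hPX : ∀ x, 0 ≤ PX x) (hPXsum : ∑ x, PX x = 1) :
    ∑ x, ∑ y, PX x * W x y * log (W x y / ∑ x', PX x' * W x' y)
      ≤ ∑ x, PX x * ∑ x', PX x' * ∑ y, W x y * log (W x y / W x' y) :=
  calc ∑ x, ∑ y, PX x * W x y * log (W x y / ∑ x', PX x' * W x' y)
      ≤ ∑ x, ∑ y, PX x * W x y * ∑ x', PX x' * log (W x y / W x' y) := by
        refine sum_le_sum fun x _ => sum_le_sum fun y _ => ?_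
        exact mul_le_mul_of_nonneg_left
          (log_div_sum_mul_le_sum_mul_log_div _ _ _ (hW x y) (fun x' _ => hPX x') hPXsum
            fun x' _ => hW x' y)
          (mul_nonneg (hPX x) (hW x y).le)
    _ = ∑ x, PX x * ∑ x', PX x' * ∑ y, W x y * log (W x y / W x' y) := by
        refine sum_congr rfl fun x _ => ?_
        simp only [mul_sum]
        rw [sum_comm]
        exact sum_congr rfl fun x' _ => sum_congr rfl fun y _ => by ring

theorem stmt5_general {α β : Type} [Fintype α] [Fintype β] [Nonempty α]
    (W : α → β → ℝ) (hW : ∀ x y, 0 < W x y)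
    (PX : α → ℝ) (hPX : ∀ x, 0 ≤ PX x) (hPXsum : ∑ x, PX x = 1) :
    ∑ x, ∑ y, PX x * W x y * Real.log (W x y / (∑ x', PX x' * W x' y))
      ≤ (Finset.univ ×ˢ Finset.univ : Finset (α × α)).sup'
          (Finset.univ_nonempty.product Finset.univ_nonempty)
          (fun p => ∑ y, W p.1 y * Real.log (W p.1 y / W p.2 y)) := by
  have hklDiv_le_sup (x x' : α) :
      ∑ y, W x y * log (W x y / W x' y) ≤ (univ ×ˢ univ : Finset (α × α)).sup'
        (univ_nonempty.product univ_nonempty)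
        (fun p => ∑ y, W p.1 y * log (W p.1 y / W p.2 y)) :=
    le_sup' (fun p : α × α => ∑ y, W p.1 y * log (W p.1 y / W p.2 y))
      (mem_product.mpr ⟨mem_univ x, mem_univ x'⟩ : (x, x') ∈ univ ×ˢ univ)
  refine (mutualInfo_le_sum_mul_sum_mul_klDiv W hW PX hPX hPXsum).trans ?_
  refine sum_mul_le_of_le _ _ _ (fun x _ => hPX x) hPXsum fun x _ => ?_
  exact sum_mul_le_of_le _ _ _ (fun x' _ => hPX x') hPXsum fun x' _ => hklDiv_le_sup x x'

/-- For a DMC with all entries positive, the capacity satisfies `C ≤ C₁`: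
the mutual information of any input distribution is at most the maximum KL
divergence between two rows of the channel. -/
theorem stmt5 {α β : Type} [Fintype α] [Fintype β] [Nonempty α] [Nonempty β]
    (W : α → β → ℝ) (hW : ∀ x y, 0 < W x y) (hWsum : ∀ x, ∑ y, W x y = 1)
    (PX : α → ℝ) (hPX : ∀ x, 0 ≤ PX x) (hPXsum : ∑ x, PX x = 1) :
    ∑ x, ∑ y, PX x * W x y * Real.log (W x y / (∑ x', PX x' * W x' y))
      ≤ (Finset.univ ×ˢ Finset.univ : Finset (α × α)).sup'
          (Finset.univ_nonempty.product Finset.univ_nonempty)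
          (fun p => ∑ y, W p.1 y * Real.log (W p.1 y / W p.2 y)) :=
  stmt5_general W hW PX hPX hPXsum
end

section
/- For any type Q_X ∈ 𝒫_n(𝒳) on a finite alphabet 𝒳, the size of the type class satisfies |𝒯_n(Q_X)| ≤ exp{n H(Q_X)} · (2πn)^{−(|𝒳|−1)/2} · Π_{x ∈ 𝒳} (1/√(Q̃_X(x))), where Q̃_X(x) = 1/(2πn) if Q_X(x) = 0 and Q̃_X(x) = Q_X(x) otherwise. -/
/-!
The type class is the orbit of any of its members under the permutations of `Fin n`, with
stabilizer the product of the symmetric groups of the fibres, so `|𝒯_n(Q)| = n! / ∏ₓ kₓ!`.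
The Stirling sequence `m! / (√(2m) (m/e)^m)` decreases to `√π`. Comparing it at `n` and at one
letter `x₀` with `kₓ₀ > 0` bounds `n! / kₓ₀!`, and the lower bound `√(2πm) (m/e)^m ≤ m!` handles
the other letters. Since `(n/e)^n / ∏ₓ (kₓ/e)^kₓ = exp (n H(Q))`, this is the claim.
-/

open Finset Real Equiv MulAction
open scoped Nat

section TypeClass

variable {ι α : Type*} [Fintype ι] [DecidableEq α]

lemma mem_orbit_domMulAct_iff_card_fiber_eq [DecidableEq ι] {f g : ι → α} :
    g ∈ orbit (Perm ι)ᵈᵐᵃ f ↔ ∀ x, #{i | g i = x} = #{i | f i = x} := by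
  simp only [← Fintype.card_subtype]
  constructor
  · rintro ⟨σ, rfl⟩ x
    exact Fintype.card_congr ((DomMulAct.mk.symm σ).subtypeEquiv fun _ => Iff.rfl)
  · intro h
    exact ⟨DomMulAct.mk (ofFiberEquiv fun x => Fintype.equivOfCardEq (h x)),
      funext fun i => ofFiberEquiv_map _ i⟩

variable [Fintype α]

lemma exists_card_fiber_eq (k : α → ℕ) (hk : ∑ x, k x = Fintype.card ι) :
    ∃ f : ι → α, ∀ x, #{i | f i = x} = k x := by
  let e : (Σ x, Fin (k x)) ≃ ι := Fintype.equivOfCardEq (by simp [hk])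
  refine ⟨fun i => (e.symm i).1, fun x => ?_⟩
  rw [← Fintype.card_subtype, Fintype.card_congr
    ((e.symm.subtypeEquiv fun _ => Iff.rfl).trans (sigmaSubtype x)), Fintype.card_fin]

variable [DecidableEq ι]

lemma nat_card_stabilizer_domMulAct (f : ι → α) :
    Nat.card (stabilizer (Perm ι)ᵈᵐᵃ f) = ∏ x, (#{i | f i = x})! := by
  simp only [← Fintype.card_subtype]
  rw [← DomMulAct.stabilizer_card f, ← Nat.card_eq_fintype_card]
  exact Nat.card_congr (DomMulAct.mk.symm.subtypeEquiv fun _ => DomMulAct.mem_stabilizer_iff)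

lemma card_typeClass_mul_prod_factorial (k : α → ℕ) (hk : ∑ x, k x = Fintype.card ι) :
    Fintype.card {f : ι → α // ∀ x, #{i | f i = x} = k x} * ∏ x, (k x)! = (Fintype.card ι)! := by
  obtain ⟨f, hf⟩ := exists_card_fiber_eq k hk
  have horbit : Fintype.card {g : ι → α // ∀ x, #{i | g i = x} = k x} =
      (orbit (Perm ι)ᵈᵐᵃ f).ncard := by
    rw [← Nat.card_coe_set_eq, ← Nat.card_eq_fintype_card]
    exact Nat.card_congr (subtypeEquivRight fun g => by
      simp [mem_orbit_domMulAct_iff_card_fiber_eq, hf])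
  rw [horbit, ← index_stabilizer, mul_comm, ← Fintype.card_perm, ← Nat.card_eq_fintype_card,
    Nat.card_congr (DomMulAct.mk : Perm ι ≃ _), ← Subgroup.card_mul_index (stabilizer _ f),
    nat_card_stabilizer_domMulAct]
  simp only [hf]

end TypeClass

namespace Stirling

lemma stirlingSeq_le_of_le {k n : ℕ} (hk : k ≠ 0) (hkn : k ≤ n) :
    stirlingSeq n ≤ stirlingSeq k := by
  obtain ⟨k, rfl⟩ := Nat.exists_eq_succ_of_ne_zero hk
  obtain ⟨n, rfl⟩ := Nat.exists_eq_succ_of_ne_zero (by omega : n ≠ 0)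
  exact stirlingSeq'_antitone (Nat.succ_le_succ_iff.mp hkn)

lemma factorial_mul_le_of_le {k n : ℕ} (hk : k ≠ 0) (hkn : k ≤ n) :
    n ! * (√(2 * π * k) * (k / exp 1) ^ k) ≤ √(2 * π * n) * (n / exp 1) ^ n * k ! := by
  have hn : n ≠ 0 := by omega
  have h := stirlingSeq_le_of_le hk hkn
  rw [stirlingSeq, stirlingSeq, div_le_div_iff₀ (by positivity) (by positivity)] at h
  have hsqrt (m : ℕ) : √(2 * π * m) = √π * √(2 * m) := by
    rw [← sqrt_mul pi_pos.le]; ring_nf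
  rw [hsqrt, hsqrt]
  nlinarith [sqrt_nonneg π]

end Stirling

open Stirling

-- The value `1` at `m = 0` (rather than `√0 · 1 = 0`) is what the paper's `Q̃(x) = 1/(2πn)` encodes.
noncomputable def stirlingApprox (m : ℕ) : ℝ :=
  if m = 0 then 1 else √(2 * π * m) * (m / exp 1) ^ m

lemma stirlingApprox_pos (m : ℕ) : 0 < stirlingApprox m := by
  unfold stirlingApprox; split_ifs with h
  · exact one_pos
  · have : (0 : ℝ) < m := by exact_mod_cast Nat.pos_of_ne_zero h
    positivity

lemma stirlingApprox_le_factorial (m : ℕ) : stirlingApprox m ≤ m ! := by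
  unfold stirlingApprox; split_ifs with h
  · simp [h]
  · exact le_factorial_stirling m

lemma factorial_div_prod_factorial_le {α : Type*} [Fintype α] [DecidableEq α] {n : ℕ}
    (hn : n ≠ 0) (k : α → ℕ) (hk : ∑ x, k x = n) :
    (n ! : ℝ) / ∏ x, ((k x)! : ℝ) ≤ √(2 * π * n) * (n / exp 1) ^ n / ∏ x, stirlingApprox (k x) := by
  obtain ⟨x₀, hx₀⟩ : ∃ x, k x ≠ 0 := by
    by_contra! h; simp [h] at hk; omega
  have hkn : k x₀ ≤ n := hk ▸ single_le_sum (fun x _ => Nat.zero_le (k x)) (mem_univ x₀)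
  rw [div_le_div_iff₀ (by positivity) (prod_pos fun x _ => stirlingApprox_pos (k x)),
    ← mul_prod_erase _ _ (mem_univ x₀), ← mul_prod_erase _ _ (mem_univ x₀), ← mul_assoc,
    ← mul_assoc]
  refine mul_le_mul ?_ (prod_le_prod (fun x _ => (stirlingApprox_pos _).le)
    fun x _ => stirlingApprox_le_factorial _) (prod_nonneg fun x _ => (stirlingApprox_pos _).le)
    (by positivity)
  simpa [stirlingApprox, hx₀] using factorial_mul_le_of_le hx₀ hkn

lemma exp_mul_neg_mul_log_div_sqrt {n : ℕ} (hn : 0 < n) (m : ℕ) :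
    exp (n * -(m / n * log (m / n))) /
        (√(2 * π * n) * √(if m = 0 then 1 / (2 * π * n) else m / n)) =
      (n / exp 1) ^ m / stirlingApprox m := by
  have hnR : (0 : ℝ) < n := by exact_mod_cast hn
  rcases eq_or_ne m 0 with rfl | hm
  · rw [if_pos rfl, ← sqrt_mul (by positivity), mul_one_div_cancel (by positivity)]
    simp [stirlingApprox]
  have hmR : (0 : ℝ) < m := by exact_mod_cast Nat.pos_of_ne_zero hm
  have hexp : exp (n * -(m / n * log (m / n))) = (n / m) ^ m := by
    rw [show (n : ℝ) * -(m / n * log (m / n)) = m * log (n / m) by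
      rw [← inv_div, log_inv]; field_simp, exp_nat_mul, exp_log (by positivity)]
  have hsqrt : √(2 * π * n) * √(m / n) = √(2 * π * m) := by
    rw [← sqrt_mul (by positivity)]; field_simp
  rw [if_neg hm, hexp, hsqrt, stirlingApprox, if_neg hm, div_pow, div_pow, div_pow]
  field_simp

lemma rpow_neg_sub_one_div_two {a : ℝ} (ha : 0 < a) (N : ℕ) :
    a ^ (-(((N : ℝ) - 1) / 2)) = √a / √a ^ N := by
  rw [sqrt_eq_rpow, ← rpow_natCast, ← rpow_mul ha.le, ← rpow_sub ha]
  congr 1; ring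

/-- Refined upper bound on the size of a type class:
`|𝒯_n(Q)| ≤ exp{n H(Q)} (2πn)^{-(|𝒳|-1)/2} ∏_x 1/√(Q̃(x))`. -/
theorem stmt7 {α : Type} [Fintype α] [DecidableEq α] (n : ℕ) (hn : 0 < n)
    (k : α → ℕ) (hk : ∑ x, k x = n)
    (Q : α → ℝ) (hQ : ∀ x, Q x = (k x : ℝ) / n)
    (Qt : α → ℝ) (hQt : ∀ x, Qt x = if k x = 0 then 1 / (2 * Real.pi * n) else Q x) :
    (Fintype.card {f : Fin n → α //
        ∀ x, (Finset.univ.filter (fun i => f i = x)).card = k x} : ℝ)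
      ≤ Real.exp ((n : ℝ) * ∑ x, -(Q x * Real.log (Q x))) *
        (2 * Real.pi * n) ^ (-(((Fintype.card α : ℝ) - 1) / 2)) *
        ∏ x, (1 / Real.sqrt (Qt x)) := by
  have hcount := card_typeClass_mul_prod_factorial k (hk.trans (Fintype.card_fin n).symm)
  rw [Fintype.card_fin] at hcount
  have hcard : (Fintype.card {f : Fin n → α // ∀ x, #{i | f i = x} = k x} : ℝ) =
      n ! / ∏ x, ((k x)! : ℝ) := by
    rw [eq_div_iff (by positivity)]; exact_mod_cast hcount
  have hletter (x : α) : (n / exp 1) ^ k x / stirlingApprox (k x) =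
      exp (n * -(Q x * log (Q x))) / (√(2 * π * n) * √(Qt x)) := by
    rw [hQt, hQ, exp_mul_neg_mul_log_div_sqrt hn]
  rw [hcard, rpow_neg_sub_one_div_two (by positivity), mul_sum, exp_sum]
  calc (n ! : ℝ) / ∏ x, ((k x)! : ℝ)
      ≤ √(2 * π * n) * (n / exp 1) ^ n / ∏ x, stirlingApprox (k x) :=
        factorial_div_prod_factorial_le hn.ne' k hk
    _ = √(2 * π * n) * ∏ x, ((n / exp 1) ^ k x / stirlingApprox (k x)) := by
        rw [prod_div_distrib, prod_pow_eq_pow_sum, hk, mul_div_assoc]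
    _ = √(2 * π * n) * ∏ x, (exp (n * -(Q x * log (Q x))) / (√(2 * π * n) * √(Qt x))) := by
        simp only [hletter]
    _ = _ := by
        simp only [prod_div_distrib, prod_mul_distrib, prod_const, card_univ, one_div,
          prod_inv_distrib]
        ring
end
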